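/- The predictor w* = (1/(‖μ‖₂·√(1+γ²)))·[γμ, μ, 0_d] ∈ ℝ^{3d} satisfies Acc_{P_{c1}}(w*) = 0.5·erfc(−ρ1·√(1 + 1/γ)). -/

import Mathlib

/-!
Conditionally on `y`, the score of `w* = c • [γμ, μ, 0]` is `c (γ μᵀx₁ + μᵀx₂)`, a sum of
independent Gaussians, hence `N(y c (1 + γ) ‖μ‖², c² γ (1 + γ) σ² ‖μ‖²)`. By the symmetry
`y ↦ -y` both classes are classified correctly with the same probability
`P(N(m, v) > 0) = ½ erfc(-m / √(2v))`, and `m / √(2v) = ρ₁ √(1 + 1/γ)`.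
-/

open MeasureTheory ProbabilityTheory Real Filter
open scoped ENNReal NNReal

noncomputable section

/-- Complementary error function `erfc x = (2/√π) ∫_x^∞ e^{−t²} dt`. -/
def erfc (x : ℝ) : ℝ := 2 / Real.sqrt Real.pi * ∫ t in Set.Ioi x, Real.exp (-t ^ 2)

/-- A vector in `ℝ^d`. -/
abbrev Vec (d : ℕ) := Fin d → ℝ

/-- The input space `ℝ^{3d}`, viewed as three blocks `x = [x1, x2, x3]`. -/
abbrev Inp (d : ℕ) := Vec d × Vec d × Vec d

/-- Euclidean dot product on `ℝ^d`. -/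
def dot {d : ℕ} (v w : Vec d) : ℝ := ∑ i, v i * w i

/-- Euclidean norm on `ℝ^d`. -/
def vnorm {d : ℕ} (v : Vec d) : ℝ := Real.sqrt (∑ i, v i ^ 2)

/-- Euclidean norm on the full input space `ℝ^{3d}`. -/
def xnorm {d : ℕ} (x : Inp d) : ℝ :=
  Real.sqrt ((∑ i, x.1 i ^ 2) + (∑ i, x.2.1 i ^ 2) + ∑ i, x.2.2 i ^ 2)

/-- Value `wᵀx` of the linear predictor `w` at input `x`. -/
def pred {d : ℕ} (w x : Inp d) : ℝ := dot w.1 x.1 + dot w.2.1 x.2.1 + dot w.2.2 x.2.2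

/-- Isotropic Gaussian `N(m, v·I_d)` on `ℝ^d` (product of coordinate Gaussians). -/
def gaussVec (d : ℕ) (m : Vec d) (v : ℝ) : Measure (Vec d) :=
  Measure.pi fun i => gaussianReal (m i) (Real.toNNReal v)

/-- Conditional law of `x` given the label `y` in context `c1`:
`x1 ~ N(μy, σ²I)`, `x2 ~ N(μy, γσ²I)`, `x3 ~ N(μ, η²I)`, independent blocks. -/
def condX1 (d : ℕ) (μ : Vec d) (σ γ η : ℝ) (y : ℝ) : Measure (Inp d) :=
  (gaussVec d (fun i => μ i * y) (σ ^ 2)).prod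
    ((gaussVec d (fun i => μ i * y) (γ * σ ^ 2)).prod
      (gaussVec d μ (η ^ 2)))

/-- Conditional law of `x` given the label `y` in context `c2`:
`x1 ~ N(μy, σ²I)`, `x2 ~ N(−μy, (σ²/γ)I)`, `x3 ~ N(−μ, η²I)`, independent blocks. -/
def condX2 (d : ℕ) (μ : Vec d) (σ γ η : ℝ) (y : ℝ) : Measure (Inp d) :=
  (gaussVec d (fun i => μ i * y) (σ ^ 2)).prod
    ((gaussVec d (fun i => -μ i * y) (σ ^ 2 / γ)).prod
      (gaussVec d (fun i => -μ i) (η ^ 2)))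

/-- Joint law of `(x, y)`: `y` uniform on `{−1, 1}`, then `x ~ cond y`. -/
def jointOf {d : ℕ} (cond : ℝ → Measure (Inp d)) : Measure (Inp d × ℝ) :=
  (2 : ℝ≥0∞)⁻¹ • (cond 1).prod (Measure.dirac (1 : ℝ))
    + (2 : ℝ≥0∞)⁻¹ • (cond (-1)).prod (Measure.dirac (-1 : ℝ))

/-- The context-`c1` distribution over `(x, y)`. -/
def Pc1 (d : ℕ) (μ : Vec d) (σ γ η : ℝ) : Measure (Inp d × ℝ) :=
  jointOf (condX1 d μ σ γ η)

/-- The context-`c2` distribution over `(x, y)`. -/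
def Pc2 (d : ℕ) (μ : Vec d) (σ γ η : ℝ) : Measure (Inp d × ℝ) :=
  jointOf (condX2 d μ σ γ η)

/-- Accuracy `Acc_P(w) = P(sign(wᵀx) = y)` of linear predictor `w` under joint law `P`. -/
def AccP {d : ℕ} (P : Measure (Inp d × ℝ)) (w : Inp d) : ℝ :=
  (P {p | Real.sign (pred w p.1) = p.2}).toReal

/-- Norm-bounded linear predictors `W1 = {w ∈ ℝ^{3d} : ‖w‖₂ ≤ 1}`. -/
def W1 (d : ℕ) : Set (Inp d) := {w | xnorm w ≤ 1}

/-- Population exponential loss `E_P[exp(−y·wᵀx)]`. -/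
def expLoss {d : ℕ} (P : Measure (Inp d × ℝ)) (w : Inp d) : ℝ :=
  ∫ p, Real.exp (-(p.2 * pred w p.1)) ∂P

end

open Set

lemma Real.sign_eq_one_iff {r : ℝ} : Real.sign r = 1 ↔ 0 < r := by
  refine ⟨fun h => ?_, Real.sign_of_pos⟩
  rcases lt_trichotomy r 0 with hr | rfl | hr
  · norm_num [Real.sign_of_neg hr] at h
  · norm_num at h
  · exact hr

lemma Real.sign_eq_neg_one_iff {r : ℝ} : Real.sign r = -1 ↔ r < 0 := by
  refine ⟨fun h => ?_, Real.sign_of_neg⟩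
  rcases lt_trichotomy r 0 with hr | rfl | hr
  · exact hr
  · norm_num at h
  · norm_num [Real.sign_of_pos hr] at h

lemma MeasureTheory.Measure.map_prod_add_eq_conv {α β M : Type*} [MeasurableSpace α]
    [MeasurableSpace β] [AddMonoid M] [MeasurableSpace M] [MeasurableAdd₂ M] {μ : Measure α}
    {ν : Measure β} [SFinite μ] [SFinite ν] {f : α → M} {g : β → M} (hf : Measurable f)
    (hg : Measurable g) :
    (μ.prod ν).map (fun p => f p.1 + g p.2) = μ.map f ∗ ν.map g := by
  rw [Measure.conv, Measure.map_prod_map _ _ hf hg, Measure.map_map (by fun_prop) (by fun_prop)]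
  rfl

lemma map_finsetSum_eq_gaussianReal {Ω ι : Type*} [MeasurableSpace Ω] {P : Measure Ω}
    [IsProbabilityMeasure P] {X : ι → Ω → ℝ} (hindep : iIndepFun X P)
    (hmeas : ∀ i, Measurable (X i)) {m : ι → ℝ} {v : ι → ℝ≥0}
    (hlaw : ∀ i, P.map (X i) = gaussianReal (m i) (v i)) (s : Finset ι) :
    P.map (∑ i ∈ s, X i) = gaussianReal (∑ i ∈ s, m i) (∑ i ∈ s, v i) := by
  classical
  induction s using Finset.induction_on with
  | empty => simp [Pi.zero_def, gaussianReal_zero_var]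
  | insert i s hi ih =>
    rw [Finset.sum_insert hi, Finset.sum_insert hi, Finset.sum_insert hi, add_comm (X i),
      add_comm (m i), add_comm (v i)]
    exact gaussianReal_add_gaussianReal_of_indepFun
      (hindep.indepFun_finsetSum_of_notMem hmeas hi) ih (hlaw i)

lemma map_pi_gaussianReal_sum_mul {ι : Type*} [Fintype ι] (m : ι → ℝ) (v : ι → ℝ≥0)
    (a : ι → ℝ) :
    (Measure.pi fun i => gaussianReal (m i) (v i)).map (fun z => ∑ i, a i * z i)
      = gaussianReal (∑ i, a i * m i) (∑ i, .mk (a i ^ 2) (sq_nonneg _) * v i) := by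
  have hindep := iIndepFun_pi (μ := fun i => gaussianReal (m i) (v i))
    (X := fun i x => a i * x) fun i => by fun_prop
  rw [← map_finsetSum_eq_gaussianReal hindep (fun i => by fun_prop) (fun i => ?_), Finset.sum_fn]
  rw [show (fun z : ι → ℝ => a i * z i) = (a i * ·) ∘ Function.eval i from rfl,
    ← Measure.map_map (by fun_prop) (by fun_prop),
    (measurePreserving_eval _ i).map_eq, gaussianReal_map_const_mul]

lemma gaussianReal_neg_Iio_zero (m : ℝ) (v : ℝ≥0) :
    gaussianReal (-m) v (Iio 0) = gaussianReal m v (Ioi 0) := by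
  rw [← gaussianReal_map_neg, Measure.map_apply measurable_neg measurableSet_Iio]
  congr 1
  ext x
  simp

lemma erfc_nonneg (x : ℝ) : 0 ≤ erfc x :=
  mul_nonneg (by positivity) (integral_nonneg fun _ => (Real.exp_pos _).le)

-- `N(0, 1/2)` has density `e^{-x²}/√π`, the integrand of `erfc`.
lemma gaussianReal_zero_inv_two_Ioi_eq_erfc (a : ℝ) :
    gaussianReal 0 2⁻¹ (Ioi a) = ENNReal.ofReal (0.5 * erfc a) := by
  have hpdf : gaussianPDFReal 0 2⁻¹ = fun x => (Real.sqrt Real.pi)⁻¹ * Real.exp (-x ^ 2) := by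
    ext x
    simp only [gaussianPDFReal, sub_zero, NNReal.coe_inv, NNReal.coe_ofNat]
    congr 3 <;> ring
  rw [gaussianReal_apply_eq_integral _ (by norm_num), hpdf, integral_const_mul, erfc]
  congr 1
  ring

lemma gaussianReal_Ioi_zero_eq_erfc (m : ℝ) {v : ℝ≥0} (hv : v ≠ 0) :
    gaussianReal m v (Ioi 0) = ENNReal.ofReal (0.5 * erfc (-(m / Real.sqrt (2 * v)))) := by
  set s := Real.sqrt (2 * v)
  have hs : 0 < s := Real.sqrt_pos.mpr (by positivity)
  have hlaw : (gaussianReal 0 2⁻¹).map (fun x => s * x + m) = gaussianReal m v := by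
    rw [show (fun x => s * x + m) = (· + m) ∘ (s * ·) from rfl,
      ← Measure.map_map (by fun_prop) (by fun_prop), gaussianReal_map_const_mul,
      gaussianReal_map_add_const]
    congr 1
    · ring
    · ext
      simp only [NNReal.coe_mul, NNReal.coe_mk, NNReal.coe_inv, NNReal.coe_ofNat, s,
        Real.sq_sqrt (by positivity : (0:ℝ) ≤ 2 * v)]
      ring
  have hpre : (fun x => s * x + m) ⁻¹' Ioi 0 = Ioi (-(m / s)) := by
    ext x
    simp only [mem_preimage, mem_Ioi]
    rw [neg_div', div_lt_iff₀' hs]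
    constructor <;> intro h <;> linarith
  rw [← hlaw, Measure.map_apply (by fun_prop) measurableSet_Ioi, hpre,
    gaussianReal_zero_inv_two_Ioi_eq_erfc]

section Vec

variable {d : ℕ}

lemma dot_self_nonneg (a : Vec d) : 0 ≤ dot a a :=
  Finset.sum_nonneg fun i _ => mul_self_nonneg (a i)

lemma dot_mul_const (a v : Vec d) (y : ℝ) : dot a (fun i => v i * y) = dot a v * y := by
  simp only [dot, Finset.sum_mul, mul_assoc]

lemma dot_smul_left (c : ℝ) (v w : Vec d) : dot (c • v) w = c * dot v w := by
  simp only [dot, Pi.smul_apply, smul_eq_mul, Finset.mul_sum, mul_assoc]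

lemma dot_smul_right (c : ℝ) (v w : Vec d) : dot v (c • w) = c * dot v w := by
  simp only [dot, Pi.smul_apply, smul_eq_mul, Finset.mul_sum, mul_left_comm]

lemma dot_self_eq_vnorm_sq (v : Vec d) : dot v v = vnorm v ^ 2 := by
  rw [vnorm, Real.sq_sqrt (Finset.sum_nonneg fun i _ => sq_nonneg (v i)), dot]
  simp only [sq]

lemma vnorm_pos {v : Vec d} (hv : v ≠ 0) : 0 < vnorm v := by
  obtain ⟨i, hi⟩ := Function.ne_iff.mp hv
  exact Real.sqrt_pos.mpr
    (Finset.sum_pos' (fun j _ => sq_nonneg (v j)) ⟨i, Finset.mem_univ i, sq_pos_of_ne_zero hi⟩)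

@[fun_prop]
lemma measurable_dot (a : Vec d) : Measurable (dot a) := by
  unfold dot; fun_prop

@[fun_prop]
lemma measurable_pred (w : Inp d) : Measurable (pred w) := by
  unfold pred; fun_prop

end Vec

instance {d : ℕ} (m : Vec d) (v : ℝ) : IsProbabilityMeasure (gaussVec d m v) := by
  unfold gaussVec; infer_instance

instance {d : ℕ} (μ : Vec d) (σ γ η y : ℝ) : IsProbabilityMeasure (condX1 d μ σ γ η y) := by
  unfold condX1; infer_instance

lemma map_dot_gaussVec {d : ℕ} (m : Vec d) {v : ℝ} (hv : 0 ≤ v) (a : Vec d) :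
    (gaussVec d m v).map (dot a) = gaussianReal (dot a m) (dot a a * v).toNNReal := by
  change (Measure.pi _).map (fun z => ∑ i, a i * z i) = _
  rw [map_pi_gaussianReal_sum_mul]
  congr 1
  ext
  rw [Real.coe_toNNReal _ (mul_nonneg (dot_self_nonneg a) hv)]
  simp only [NNReal.coe_sum, NNReal.coe_mul, NNReal.coe_mk, Real.coe_toNNReal _ hv, dot,
    Finset.sum_mul, sq]

lemma map_pred_condX1 {d : ℕ} (μ : Vec d) (σ : ℝ) {γ : ℝ} (hγ : 0 ≤ γ) (η : ℝ) (w : Inp d)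
    (y : ℝ) :
    (condX1 d μ σ γ η y).map (pred w)
      = gaussianReal (dot w.1 μ * y + dot w.2.1 μ * y + dot w.2.2 μ)
          (dot w.1 w.1 * σ ^ 2 + dot w.2.1 w.2.1 * (γ * σ ^ 2)
            + dot w.2.2 w.2.2 * η ^ 2).toNNReal := by
  have h₁ := dot_self_nonneg w.1
  have h₂ := dot_self_nonneg w.2.1
  have h₃ := dot_self_nonneg w.2.2
  have hpred : pred w = fun x : Inp d => dot w.1 x.1 + (dot w.2.1 x.2.1 + dot w.2.2 x.2.2) := by
    ext x; exact add_assoc _ _ _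
  rw [condX1, hpred, Measure.map_prod_add_eq_conv (measurable_dot _)
      (g := fun x : Vec d × Vec d => dot w.2.1 x.1 + dot w.2.2 x.2) (by fun_prop),
    Measure.map_prod_add_eq_conv (measurable_dot _) (measurable_dot _),
    map_dot_gaussVec _ (by positivity), map_dot_gaussVec _ (by positivity),
    map_dot_gaussVec _ (by positivity), gaussianReal_conv_gaussianReal,
    gaussianReal_conv_gaussianReal, ← Real.toNNReal_add (by positivity) (by positivity),
    ← Real.toNNReal_add (by positivity) (by positivity), dot_mul_const, dot_mul_const,
    ← add_assoc, ← add_assoc]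

lemma jointOf_apply {d : ℕ} (cond : ℝ → Measure (Inp d)) [∀ y, SFinite (cond y)]
    (s : Set (Inp d × ℝ)) :
    jointOf cond s = 2⁻¹ * cond 1 {x | (x, 1) ∈ s} + 2⁻¹ * cond (-1) {x | (x, -1) ∈ s} := by
  rw [jointOf, Measure.add_apply, Measure.smul_apply, Measure.smul_apply, Measure.prod_dirac,
    Measure.prod_dirac, (measurableEmbedding_prod_mk_right _).map_apply,
    (measurableEmbedding_prod_mk_right _).map_apply]
  rfl

lemma accP_Pc1_of_snd_snd_eq_zero {d : ℕ} (μ : Vec d) (σ : ℝ) {γ : ℝ} (hγ : 0 ≤ γ) (η : ℝ)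
    {w : Inp d} (hw : w.2.2 = 0) (hV : 0 < (dot w.1 w.1 + γ * dot w.2.1 w.2.1) * σ ^ 2) :
    AccP (Pc1 d μ σ γ η) w = 0.5 * erfc (-((dot w.1 μ + dot w.2.1 μ) /
      Real.sqrt (2 * ((dot w.1 w.1 + γ * dot w.2.1 w.2.1) * σ ^ 2)))) := by
  set V := ((dot w.1 w.1 + γ * dot w.2.1 w.2.1) * σ ^ 2).toNNReal
  have hV0 : V ≠ 0 := by simpa [V] using hV
  have hlaw (y : ℝ) : (condX1 d μ σ γ η y).map (pred w)
      = gaussianReal ((dot w.1 μ + dot w.2.1 μ) * y) V := by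
    rw [map_pred_condX1 μ σ hγ η w y, hw]
    congr 2 <;> simp only [dot, Pi.zero_apply, zero_mul, Finset.sum_const_zero] <;> ring
  have hpos : {x | (x, (1 : ℝ)) ∈ {p : Inp d × ℝ | Real.sign (pred w p.1) = p.2}}
      = pred w ⁻¹' Ioi 0 := by
    ext x; exact Real.sign_eq_one_iff
  have hneg : {x | (x, (-1 : ℝ)) ∈ {p : Inp d × ℝ | Real.sign (pred w p.1) = p.2}}
      = pred w ⁻¹' Iio 0 := by
    ext x; exact Real.sign_eq_neg_one_iff
  rw [AccP, Pc1, jointOf_apply, hpos, hneg, ← Measure.map_apply (by fun_prop) measurableSet_Ioi,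
    ← Measure.map_apply (by fun_prop) measurableSet_Iio, hlaw, hlaw, mul_neg_one,
    gaussianReal_neg_Iio_zero, mul_one, ← add_mul, ENNReal.inv_two_add_inv_two, one_mul,
    gaussianReal_Ioi_zero_eq_erfc _ hV0, ENNReal.toReal_ofReal (mul_nonneg (by norm_num) (erfc_nonneg _)),
    Real.coe_toNNReal _ hV.le]

theorem c1_optimal_accuracy_on_c1_general (d : ℕ) (μ : Vec d) (hμ : μ ≠ 0)
    (σ γ η : ℝ) (hσ : 0 < σ) (hγ : 0 < γ) :
    AccP (Pc1 d μ σ γ η)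
        ((1 / (vnorm μ * Real.sqrt (1 + γ ^ 2))) • ((γ • μ, μ, (0 : Vec d)) : Inp d))
      = 0.5 * erfc (-((vnorm μ / (Real.sqrt 2 * σ)) * Real.sqrt (1 + 1 / γ))) := by
  have hN := vnorm_pos hμ
  have hc : 0 < 1 / (vnorm μ * Real.sqrt (1 + γ ^ 2)) := by positivity
  rw [accP_Pc1_of_snd_snd_eq_zero μ σ hγ.le η (by simp)] <;>
    simp only [Prod.smul_fst, Prod.smul_snd, dot_smul_left, dot_smul_right] <;>
    simp only [dot_self_eq_vnorm_sq] <;>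
    generalize 1 / (vnorm μ * Real.sqrt (1 + γ ^ 2)) = c at hc ⊢ <;>
    generalize vnorm μ = N at hN ⊢
  · congr 3
    rw [show 2 * ((c * (γ * (c * (γ * N ^ 2))) + γ * (c * (c * N ^ 2))) * σ ^ 2)
        = (c * N * σ) ^ 2 * (2 * γ * (γ + 1)) by ring,
      Real.sqrt_mul' _ (by positivity), Real.sqrt_sq (by positivity),
      Real.sqrt_mul (by positivity), Real.sqrt_mul (by positivity),
      show 1 + 1 / γ = (γ + 1) / γ by field_simp, Real.sqrt_div' _ hγ.le]
    have hsq := Real.sq_sqrt (show 0 ≤ γ + 1 by positivity)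
    have : 0 < Real.sqrt (γ + 1) := by positivity
    field_simp
    rw [hsq]
  · positivity

theorem c1_optimal_accuracy_on_c1 (d : ℕ) (hd : 1 ≤ d) (μ : Vec d) (hμ : μ ≠ 0)
    (σ γ η : ℝ) (hσ : 0 < σ) (hγ : 0 < γ) (hη : 0 < η) :
    AccP (Pc1 d μ σ γ η)
        ((1 / (vnorm μ * Real.sqrt (1 + γ ^ 2))) • ((γ • μ, μ, (0 : Vec d)) : Inp d))
      = 0.5 * erfc (-((vnorm μ / (Real.sqrt 2 * σ)) * Real.sqrt (1 + 1 / γ))) :=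
  c1_optimal_accuracy_on_c1_general d μ hμ σ γ η hσ hγ
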